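/- If f belongs to the class S*_B with associated Schwarz function w having Taylor coefficients w(z) = Σ_{n≥1} b_n z^n, then the Taylor coefficients of f satisfy a_2 = b_1, a_3 = (3/4)·b_1² + (1/2)·b_2, and a_4 = (19/36)·b_1³ + (5/6)·b_1·b_2 + (1/3)·b_3. -/

import Mathlib

open Complex Metric

/-- The `n`-th Taylor coefficient of `f` at `0`. -/
noncomputable def taylorCoeff (f : ℂ → ℂ) (n : ℕ) : ℂ :=
  iteratedDeriv n f 0 / n.factorial

/-- Membership in the class `S*_B`: `f` is analytic on the unit disk, normalized by
`f(0) = 0` and `f'(0) = 1`, and there is a Schwarz function `w` with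
`z f'(z) (1 - log(1 + w z)) = f z` on the unit disk. -/
def IsSB (f : ℂ → ℂ) : Prop :=
  DifferentiableOn ℂ f (ball (0:ℂ) 1) ∧ f 0 = 0 ∧ deriv f 0 = 1 ∧
  ∃ w : ℂ → ℂ, DifferentiableOn ℂ w (ball (0:ℂ) 1) ∧ w 0 = 0 ∧
    (∀ z ∈ ball (0:ℂ) 1, ‖w z‖ < 1) ∧
    (∀ z ∈ ball (0:ℂ) 1, z * deriv f z * (1 - Complex.log (1 + w z)) = f z)
/-!
With `g = 1 - log (1 + w)`, the relation reads `f = z f' g`. By the Leibniz rule the Taylor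
coefficients satisfy `a_n = ∑_{i ≤ n} i a_i g_{n-i}`; since `g_0 = 1` and `a_1 = 1`, this is a
triangular system for `a_2, a_3, a_4` in terms of `g_1, g_2, g_3`. Those in turn come from the
coefficients of `log (1 + w)`, determined by the same Leibniz rule applied to
`(1 + w) · (log (1 + w))' = w'`.
-/

open Filter Finset Topology

section TaylorCoeff

variable {f g : ℂ → ℂ}

theorem taylorCoeff_congr (h : f =ᶠ[𝓝 0] g) : taylorCoeff f = taylorCoeff g := by
  funext n
  simp only [taylorCoeff, h.iteratedDeriv_eq n]

theorem taylorCoeff_zero : taylorCoeff f 0 = f 0 := by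
  simp [taylorCoeff]

theorem taylorCoeff_one : taylorCoeff f 1 = deriv f 0 := by
  simp [taylorCoeff]

theorem taylorCoeff_deriv (n : ℕ) :
    taylorCoeff (deriv f) n = (n + 1) * taylorCoeff f (n + 1) := by
  simp only [taylorCoeff, iteratedDeriv_succ', Nat.factorial_succ, Nat.cast_mul, Nat.cast_succ]
  field_simp

theorem taylorCoeff_const_add (c : ℂ) (n : ℕ) :
    taylorCoeff (fun z => c + f z) (n + 1) = taylorCoeff f (n + 1) := by
  simp only [taylorCoeff, iteratedDeriv_const_add n.succ_pos]

theorem taylorCoeff_const_sub (c : ℂ) (n : ℕ) :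
    taylorCoeff (fun z => c - f z) (n + 1) = -taylorCoeff f (n + 1) := by
  simp only [taylorCoeff, iteratedDeriv_const_sub n.succ_pos, iteratedDeriv_neg, neg_div]

theorem taylorCoeff_mul (hf : AnalyticAt ℂ f 0) (hg : AnalyticAt ℂ g 0) (n : ℕ) :
    taylorCoeff (fun z => f z * g z) n =
      ∑ i ∈ range (n + 1), taylorCoeff f i * taylorCoeff g (n - i) := by
  simp only [taylorCoeff, iteratedDeriv_fun_mul hf.contDiffAt hg.contDiffAt, sum_div]
  refine sum_congr rfl fun i hi => ?_
  have hin : i ≤ n := Nat.lt_succ_iff.mp (mem_range.mp hi)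
  have hchoose : (n.choose i : ℂ) ≠ 0 := by exact_mod_cast (Nat.choose_pos hin).ne'
  rw [← Nat.choose_mul_factorial_mul_factorial hin]
  push_cast
  field_simp

theorem taylorCoeff_id_mul_deriv (hf : AnalyticAt ℂ f 0) (n : ℕ) :
    taylorCoeff (fun z => z * deriv f z) n = n * taylorCoeff f n := by
  rw [taylorCoeff_mul (f := fun z => z) analyticAt_id hf.deriv]
  rcases n with _ | n
  · simp [taylorCoeff_zero]
  · rw [sum_eq_single 1]
    · simp [taylorCoeff_one, taylorCoeff_deriv]
    · intro i _ hi
      simp [taylorCoeff, iteratedDeriv_fun_id_zero, hi]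
    · simp

theorem taylorCoeff_eq_sum_of_eventuallyEq_id_mul_deriv_mul (hf : AnalyticAt ℂ f 0)
    (hg : AnalyticAt ℂ g 0) (h : (fun z => z * deriv f z * g z) =ᶠ[𝓝 0] f) (n : ℕ) :
    taylorCoeff f n = ∑ i ∈ range (n + 1), i * taylorCoeff f i * taylorCoeff g (n - i) := by
  have hzf : AnalyticAt ℂ (fun z => z * deriv f z) 0 := analyticAt_id.fun_mul hf.deriv
  calc taylorCoeff f n = taylorCoeff (fun z => z * deriv f z * g z) n := by
        rw [taylorCoeff_congr h]
    _ = _ := by simp only [taylorCoeff_mul hzf hg, taylorCoeff_id_mul_deriv hf]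

end TaylorCoeff

theorem mul_deriv_log_eventuallyEq {g : ℂ → ℂ} {x : ℂ} (hg : AnalyticAt ℂ g x)
    (hx : g x ∈ slitPlane) :
    (fun z => g z * deriv (fun z => log (g z)) z) =ᶠ[𝓝 x] deriv g := by
  filter_upwards [hg.eventually_analyticAt,
    hg.continuousAt.eventually_mem (isOpen_slitPlane.mem_nhds hx)] with z hgz hz
  rw [(hgz.differentiableAt.hasDerivAt.clog hz).deriv]
  field_simp [slitPlane_ne_zero hz]

theorem taylorCoeff_log_one_add {w : ℂ → ℂ} (hw : AnalyticAt ℂ w 0) (hw0 : w 0 = 0) :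
    taylorCoeff (fun z => log (1 + w z)) 1 = taylorCoeff w 1 ∧
    taylorCoeff (fun z => log (1 + w z)) 2 = taylorCoeff w 2 - taylorCoeff w 1 ^ 2 / 2 ∧
    taylorCoeff (fun z => log (1 + w z)) 3 =
      taylorCoeff w 3 - taylorCoeff w 1 * taylorCoeff w 2 + taylorCoeff w 1 ^ 3 / 3 := by
  have h1w : AnalyticAt ℂ (fun z => 1 + w z) 0 := analyticAt_const.add hw
  have hslit : 1 + w 0 ∈ slitPlane := by simp [hw0]
  have hrec (n : ℕ) := (taylorCoeff_mul h1w (h1w.clog hslit).deriv n).symm.trans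
    (congrFun (taylorCoeff_congr (mul_deriv_log_eventuallyEq h1w hslit)) n)
  have e0 := hrec 0
  have e1 := hrec 1
  have e2 := hrec 2
  have hc0 : taylorCoeff (fun z => 1 + w z) 0 = 1 := by simp [taylorCoeff_zero, hw0]
  simp only [sum_range_succ, sum_range_zero, taylorCoeff_deriv, taylorCoeff_const_add, hc0,
    Nat.reduceAdd, Nat.reduceSub, Nat.cast_ofNat] at e0 e1 e2
  refine ⟨?_, ?_, ?_⟩
  · linear_combination e0
  · linear_combination e1 / 2 - taylorCoeff w 1 * e0 / 2
  · linear_combination e2 / 3 - taylorCoeff w 1 * e1 / 3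
      + (taylorCoeff w 1 ^ 2 / 3 - taylorCoeff w 2 / 3) * e0

theorem coeff_in_terms_of_schwarz_general (f w : ℂ → ℂ)
    (hf : DifferentiableOn ℂ f (ball (0:ℂ) 1)) (hf1 : deriv f 0 = 1)
    (hw : DifferentiableOn ℂ w (ball (0:ℂ) 1)) (hw0 : w 0 = 0)
    (heq : ∀ z ∈ ball (0:ℂ) 1, z * deriv f z * (1 - Complex.log (1 + w z)) = f z) :
    taylorCoeff f 2 = taylorCoeff w 1 ∧
    taylorCoeff f 3 = (3 / 4) * (taylorCoeff w 1) ^ 2 + (1 / 2) * taylorCoeff w 2 ∧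
    taylorCoeff f 4 = (19 / 36) * (taylorCoeff w 1) ^ 3 +
      (5 / 6) * taylorCoeff w 1 * taylorCoeff w 2 + (1 / 3) * taylorCoeff w 3 := by
  have hball : ball (0:ℂ) 1 ∈ 𝓝 0 := ball_mem_nhds 0 one_pos
  have hwa : AnalyticAt ℂ w 0 := hw.analyticAt hball
  have hga : AnalyticAt ℂ (fun z => 1 - log (1 + w z)) 0 :=
    analyticAt_const.sub ((analyticAt_const.add hwa).clog (by simp [hw0]))
  have hrec := taylorCoeff_eq_sum_of_eventuallyEq_id_mul_deriv_mul (hf.analyticAt hball) hga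
    (eventually_of_mem hball heq)
  obtain ⟨hℓ1, hℓ2, hℓ3⟩ := taylorCoeff_log_one_add hwa hw0
  have ha1 : taylorCoeff f 1 = 1 := by rw [taylorCoeff_one, hf1]
  have hg0 : taylorCoeff (fun z => 1 - log (1 + w z)) 0 = 1 := by simp [taylorCoeff_zero, hw0]
  have e2 := hrec 2
  have e3 := hrec 3
  have e4 := hrec 4
  simp only [sum_range_succ, sum_range_zero, taylorCoeff_const_sub, hℓ1, hℓ2, hℓ3, ha1, hg0,
    Nat.reduceAdd, Nat.reduceSub, Nat.cast_ofNat] at e2 e3 e4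
  refine ⟨?_, ?_, ?_⟩
  · linear_combination -e2
  · linear_combination -e3 / 2 - taylorCoeff w 1 * e2
  · linear_combination -e4 / 3 - taylorCoeff w 1 * e3 / 2
      + (taylorCoeff w 1 ^ 2 / 3 - 2 * taylorCoeff w 2 / 3 - taylorCoeff w 1 ^ 2) * e2

theorem coeff_in_terms_of_schwarz (f w : ℂ → ℂ)
    (hf : DifferentiableOn ℂ f (ball (0:ℂ) 1)) (hf0 : f 0 = 0) (hf1 : deriv f 0 = 1)
    (hw : DifferentiableOn ℂ w (ball (0:ℂ) 1)) (hw0 : w 0 = 0)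
    (hwb : ∀ z ∈ ball (0:ℂ) 1, ‖w z‖ < 1)
    (heq : ∀ z ∈ ball (0:ℂ) 1, z * deriv f z * (1 - Complex.log (1 + w z)) = f z) :
    taylorCoeff f 2 = taylorCoeff w 1 ∧
    taylorCoeff f 3 = (3 / 4) * (taylorCoeff w 1) ^ 2 + (1 / 2) * taylorCoeff w 2 ∧
    taylorCoeff f 4 = (19 / 36) * (taylorCoeff w 1) ^ 3 +
      (5 / 6) * taylorCoeff w 1 * taylorCoeff w 2 + (1 / 3) * taylorCoeff w 3 :=
  coeff_in_terms_of_schwarz_general f w hf hf1 hw hw0 heq
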